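/- arXiv:1907.02455 — 2 statements merged into one kernel-verified Lean document; each statement's English description precedes it below -/
import Mathlib

section
/- (Ellipticity of inf-type operators) Let {K_a}_{a∈A} ⊆ L₀ be a nonempty family of kernels with associated linear operators L_a, and set Iw(x) := inf_{a∈A} L_a w(x). If u, v ∈ L¹(ω_s) are both C^{1,1} at a point x ∈ ℝⁿ, then Iu(x) and Iv(x) are finite and M⁻(u − v)(x) ≤ Iu(x) − Iv(x) ≤ M⁺(u − v)(x). -/
open MeasureTheory Metric Set Filter
open scoped ENNReal RealInnerProductSpace Topology

noncomputable section

/-- `ℝⁿ` as a Euclidean space. -/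
abbrev Rn (n : ℕ) := EuclideanSpace ℝ (Fin n)

/-- Second difference `δ(u,x,y) = u(x+y) + u(x−y) − 2u(x)`. -/
def sdelta {n : ℕ} (u : Rn n → ℝ) (x y : Rn n) : ℝ :=
  u (x + y) + u (x - y) - 2 * u x

/-- The kernel class `L₀` with order `2s` and ellipticity constants `lam ≤ Lam`. -/
def InL0 (n : ℕ) (s lam Lam : ℝ) (K : Rn n → ℝ) : Prop :=
  Measurable K ∧ (∀ y, K (-y) = K y) ∧
    ∀ y : Rn n, y ≠ 0 →
      lam * ‖y‖ ^ (-((n : ℝ) + 2 * s)) ≤ K y ∧ K y ≤ Lam * ‖y‖ ^ (-((n : ℝ) + 2 * s))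

/-- The linear nonlocal operator associated with a kernel `K`. -/
def Lop {n : ℕ} (K : Rn n → ℝ) (u : Rn n → ℝ) (x : Rn n) : ℝ :=
  ∫ y, sdelta u x y * K y

/-- The extremal Pucci operator `M⁺` associated to `L₀`. -/
def Mplus (n : ℕ) (s lam Lam : ℝ) (u : Rn n → ℝ) (x : Rn n) : ℝ :=
  ∫ y, (Lam * max (sdelta u x y) 0 - lam * (-(min (sdelta u x y) 0))) *
    ‖y‖ ^ (-((n : ℝ) + 2 * s))

/-- The extremal Pucci operator `M⁻` associated to `L₀`. -/
def Mminus (n : ℕ) (s lam Lam : ℝ) (u : Rn n → ℝ) (x : Rn n) : ℝ :=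
  ∫ y, (lam * max (sdelta u x y) 0 - Lam * (-(min (sdelta u x y) 0))) *
    ‖y‖ ^ (-((n : ℝ) + 2 * s))

/-- `J u ≥ f` in `Ω` in the viscosity sense: test functions touch `u` from above. -/
def ViscSubSol {n : ℕ} (J : (Rn n → ℝ) → Rn n → ℝ) (Ω : Set (Rn n)) (f u : Rn n → ℝ) : Prop :=
  ∀ x₀ ∈ Ω, ∀ N : Set (Rn n), IsOpen N → x₀ ∈ N → N ⊆ Ω →
    ∀ φ : Rn n → ℝ, φ x₀ = u x₀ → (∀ x ∈ N, x ≠ x₀ → u x < φ x) →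
      ContDiffOn ℝ 2 φ (closure N) → (∀ x, x ∉ N → φ x = u x) → f x₀ ≤ J φ x₀

/-- `J u ≤ f` in `Ω` in the viscosity sense: test functions touch `u` from below. -/
def ViscSupSol {n : ℕ} (J : (Rn n → ℝ) → Rn n → ℝ) (Ω : Set (Rn n)) (f u : Rn n → ℝ) : Prop :=
  ∀ x₀ ∈ Ω, ∀ N : Set (Rn n), IsOpen N → x₀ ∈ N → N ⊆ Ω →
    ∀ φ : Rn n → ℝ, φ x₀ = u x₀ → (∀ x ∈ N, x ≠ x₀ → φ x < u x) →
      ContDiffOn ℝ 2 φ (closure N) → (∀ x, x ∉ N → φ x = u x) → J φ x₀ ≤ f x₀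

/-- The sup-norm of `w` over `Ω`, valued in `ℝ≥0∞`. -/
def eSupN {n : ℕ} (Ω : Set (Rn n)) (w : Rn n → ℝ) : ℝ≥0∞ :=
  ⨆ x ∈ Ω, ENNReal.ofReal |w x|

/-- The Hölder seminorm `[w]_{C^γ(Ω)}` for `γ ∈ (0,1)`, valued in `ℝ≥0∞`. -/
def eHolder {n : ℕ} (γ : ℝ) (Ω : Set (Rn n)) (w : Rn n → ℝ) : ℝ≥0∞ :=
  ⨆ x ∈ Ω, ⨆ y ∈ Ω, ⨆ _ : x ≠ y, ENNReal.ofReal (|w x - w y| / ‖x - y‖ ^ γ)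

/-- The Hölder seminorm `[∇w]_{C^{γ-1}(Ω)}` for `γ ∈ (1,2)`, valued in `ℝ≥0∞`. -/
def eHolderGrad {n : ℕ} (γ : ℝ) (Ω : Set (Rn n)) (w : Rn n → ℝ) : ℝ≥0∞ :=
  ⨆ x ∈ Ω, ⨆ y ∈ Ω, ⨆ _ : x ≠ y,
    ENNReal.ofReal (‖gradient w x - gradient w y‖ / ‖x - y‖ ^ (γ - 1))

/-- The sup-norm of the gradient of `w` over `Ω`, valued in `ℝ≥0∞`. -/
def eSupGrad {n : ℕ} (Ω : Set (Rn n)) (w : Rn n → ℝ) : ℝ≥0∞ :=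
  ⨆ x ∈ Ω, ENNReal.ofReal ‖gradient w x‖

/-- The Hölder seminorm `[w]_{C^γ(Ω)}` for non-integer `γ ∈ (0,2)`. -/
def eHolderSemi {n : ℕ} (γ : ℝ) (Ω : Set (Rn n)) (w : Rn n → ℝ) : ℝ≥0∞ :=
  if γ < 1 then eHolder γ Ω w else eHolderGrad γ Ω w

/-- The full Hölder norm `‖w‖_{C^γ(Ω)}` for non-integer `γ ∈ (0,2)`. -/
def eHolderNrm {n : ℕ} (γ : ℝ) (Ω : Set (Rn n)) (w : Rn n → ℝ) : ℝ≥0∞ :=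
  if γ < 1 then eSupN Ω w + eHolder γ Ω w
  else eSupN Ω w + eSupGrad Ω w + eHolderGrad γ Ω w

/-- The weight `ω_s(x) = (1+|x|^{n+2s})⁻¹`. -/
def omegaS (n : ℕ) (s : ℝ) (x : Rn n) : ℝ := (1 + ‖x‖ ^ ((n : ℝ) + 2 * s))⁻¹

/-- `w ∈ L¹(ω_s)`. -/
def MemL1w (n : ℕ) (s : ℝ) (w : Rn n → ℝ) : Prop :=
  Integrable (fun x => w x * omegaS n s x)

/-- `w` is `C^{1,1}` at the point `x`. -/
def C11At {n : ℕ} (w : Rn n → ℝ) (x : Rn n) : Prop :=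
  ∃ C₀ > 0, ∃ r > 0, ∀ y : Rn n, ‖y‖ ≤ r → |sdelta w x y| ≤ C₀ * ‖y‖ ^ 2

/-- A translation invariant operator elliptic with respect to `L₀`. -/
structure EllipticOp (n : ℕ) (s lam Lam : ℝ) where
  op : (Rn n → ℝ) → Rn n → ℝ
  elliptic : ∀ u v : Rn n → ℝ, Continuous u → Continuous v → MemL1w n s u → MemL1w n s v →
    ∀ x : Rn n, C11At u x → C11At v x →
      Mminus n s lam Lam (fun z => u z - v z) x ≤ op u x - op v x ∧
        op u x - op v x ≤ Mplus n s lam Lam (fun z => u z - v z) x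
  continuousOn : ∀ (w : Rn n → ℝ) (O : Set (Rn n)), IsOpen O → ContDiffOn ℝ 2 w O →
    (∃ M, ∀ x, |w x| ≤ M) → ContinuousOn (op w) O
  translationInvariant : ∀ (w : Rn n → ℝ) (z x : Rn n), Continuous w → MemL1w n s w →
    C11At w (x + z) → op (fun y => w (y + z)) x = op w (x + z)

/-- `w` coincides with a quadratic polynomial on `B_ε`. -/
def IsQuadOn {n : ℕ} (ε : ℝ) (w : Rn n → ℝ) : Prop :=
  ∃ (a : ℝ) (b : Rn n) (Q : Rn n →L[ℝ] Rn n →L[ℝ] ℝ),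
    ∀ x ∈ ball (0 : Rn n) ε, w x = a + ⟪b, x⟫ + Q x x

/-- Weak convergence of a sequence of elliptic operators. -/
def WeakConvSeq {n : ℕ} {s lam Lam : ℝ} (Im : ℕ → EllipticOp n s lam Lam)
    (I : EllipticOp n s lam Lam) : Prop :=
  ∀ ε : ℝ, 0 < ε → ∀ w : Rn n → ℝ, MemL1w n s w → IsQuadOn ε w →
    TendstoUniformlyOn (fun m => (Im m).op w) (I.op w) atTop (closure (ball 0 (ε / 2)))

/-!
For a kernel with `λ‖y‖^{-n-2s} ≤ K(y) ≤ Λ‖y‖^{-n-2s}` one has pointwise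
`(λδ⁺ − Λδ⁻)‖y‖^{-n-2s} ≤ δ K ≤ (Λδ⁺ − λδ⁻)‖y‖^{-n-2s}`, so after integrating
`M⁻w(x) ≤ L_a w(x) ≤ M⁺w(x)` for every `a`. Applied to `w = u − v` and combined with linearity of
`L_a`, this bounds `L_a u(x) − L_a v(x)` between `M⁻(u−v)(x)` and `M⁺(u−v)(x)` uniformly in `a`,
and such a uniform two-sided bound passes to the infima. All integrals converge because
`C^{1,1}` at `x` makes `δ(w,x,y)‖y‖^{-n-2s} = O(‖y‖^{2-n-2s})` near `0`, while `w ∈ L¹(ω_s)`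
controls the tail.
-/

lemma add_rpow_le_two_rpow_mul_rpow_add_rpow {p a b : ℝ} (hp : 0 ≤ p) (ha : 0 ≤ a)
    (hb : 0 ≤ b) : (a + b) ^ p ≤ 2 ^ p * (a ^ p + b ^ p) := calc
  (a + b) ^ p ≤ (2 * max a b) ^ p := by
    gcongr; rw [two_mul]; exact add_le_add (le_max_left a b) (le_max_right a b)
  _ = 2 ^ p * max (a ^ p) (b ^ p) := by
    rw [Real.mul_rpow zero_le_two (ha.trans (le_max_left a b)), Real.rpow_max ha hb hp]
  _ ≤ 2 ^ p * (a ^ p + b ^ p) := by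
    gcongr; exact max_le_add_of_nonneg (by positivity) (by positivity)

section Weight

variable {n : ℕ} {s : ℝ}

lemma omegaS_pos (x : Rn n) : 0 < omegaS n s x := by
  unfold omegaS; positivity

@[fun_prop]
lemma measurable_omegaS : Measurable (omegaS n s) := by
  unfold omegaS; fun_prop

lemma omegaS_neg (x : Rn n) : omegaS n s (-x) = omegaS n s x := by
  simp only [omegaS, norm_neg]

lemma omegaS_le_mul_omegaS_add (hs : 0 ≤ s) (x y : Rn n) :
    omegaS n s y ≤ 2 ^ ((n : ℝ) + 2 * s) * (1 + ‖x‖ ^ ((n : ℝ) + 2 * s)) * omegaS n s (x + y) := by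
  set q : ℝ := n + 2 * s
  have hq : 0 ≤ q := by positivity
  have hx : 0 ≤ ‖x‖ ^ q := by positivity
  have hy : 0 ≤ ‖y‖ ^ q := by positivity
  have h2 : 1 ≤ (2 : ℝ) ^ q := Real.one_le_rpow one_le_two hq
  have peetre : 1 + ‖x + y‖ ^ q ≤ 2 ^ q * (1 + ‖x‖ ^ q) * (1 + ‖y‖ ^ q) := calc
    1 + ‖x + y‖ ^ q ≤ 1 + 2 ^ q * (‖x‖ ^ q + ‖y‖ ^ q) := by
      gcongr
      exact (Real.rpow_le_rpow (norm_nonneg _) (norm_add_le x y) hq).trans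
        (add_rpow_le_two_rpow_mul_rpow_add_rpow hq (norm_nonneg x) (norm_nonneg y))
    _ ≤ 2 ^ q * (1 + ‖x‖ ^ q) * (1 + ‖y‖ ^ q) := by nlinarith [mul_nonneg hx hy]
  simp only [omegaS]
  rw [← div_eq_mul_inv, inv_le_comm₀ (by positivity) (by positivity), inv_div]
  exact (div_le_iff₀ (by positivity)).2 (peetre.trans_eq (by ring))

lemma integrable_omegaS (hs : 0 < s) : Integrable (omegaS n s) := by
  set q : ℝ := n + 2 * s
  have hq : 0 ≤ q := by positivity
  have hnq : (Module.finrank ℝ (Rn n) : ℝ) < q := by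
    rw [finrank_euclideanSpace_fin]; simp only [q]; linarith
  refine ((integrable_one_add_norm hnq).const_mul (2 ^ q)).mono'
    measurable_omegaS.aestronglyMeasurable (ae_of_all _ fun x => ?_)
  have hbracket : (1 + ‖x‖) ^ q ≤ 2 ^ q * (1 + ‖x‖ ^ q) := by
    simpa using add_rpow_le_two_rpow_mul_rpow_add_rpow hq zero_le_one (norm_nonneg x)
  rw [Real.norm_of_nonneg (omegaS_pos x).le, omegaS, Real.rpow_neg (by positivity),
    ← div_eq_mul_inv, inv_le_comm₀ (by positivity) (by positivity), inv_div]
  exact (div_le_iff₀ (by positivity)).2 (hbracket.trans_eq (by ring))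

lemma MemL1w.aestronglyMeasurable {w : Rn n → ℝ} (hw : MemL1w n s w) :
    AEStronglyMeasurable w := by
  refine ((Integrable.aestronglyMeasurable hw).mul
    (measurable_omegaS (n := n) (s := s)).inv.aestronglyMeasurable).congr (ae_of_all _ fun x => ?_)
  simp [mul_assoc, mul_inv_cancel₀ (omegaS_pos x).ne']

lemma MemL1w.sub {u v : Rn n → ℝ} (hu : MemL1w n s u) (hv : MemL1w n s v) :
    MemL1w n s (fun z => u z - v z) :=
  (Integrable.sub hu hv).congr (ae_of_all _ fun z => by simp only [Pi.sub_apply]; ring)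

lemma MemL1w.comp_neg {w : Rn n → ℝ} (hw : MemL1w n s w) : MemL1w n s (fun y => w (-y)) := by
  simpa only [MemL1w, omegaS_neg] using Integrable.comp_neg (f := fun y => w y * omegaS n s y) hw

lemma MemL1w.comp_add_left (hs : 0 ≤ s) {w : Rn n → ℝ} (hw : MemL1w n s w) (x : Rn n) :
    MemL1w n s (fun y => w (x + y)) := by
  have hshift : Integrable (fun y => w (x + y) * omegaS n s (x + y)) :=
    Integrable.comp_add_left (f := fun y => w y * omegaS n s y) hw x
  refine (hshift.norm.const_mul (2 ^ ((n : ℝ) + 2 * s) * (1 + ‖x‖ ^ ((n : ℝ) + 2 * s)))).mono'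
    (((hw.aestronglyMeasurable.comp_measurePreserving (measurePreserving_add_left _ x)).mul
      measurable_omegaS.aestronglyMeasurable)) (ae_of_all _ fun y => ?_)
  simp only [norm_mul, Real.norm_eq_abs, abs_of_pos (omegaS_pos _)]
  calc |w (x + y)| * omegaS n s y
      ≤ |w (x + y)| * (2 ^ ((n : ℝ) + 2 * s) * (1 + ‖x‖ ^ ((n : ℝ) + 2 * s))
          * omegaS n s (x + y)) := by gcongr; exact omegaS_le_mul_omegaS_add hs x y
    _ = _ := by ring

lemma MemL1w.sdelta (hs : 0 < s) {w : Rn n → ℝ} (hw : MemL1w n s w) (x : Rn n) :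
    MemL1w n s (sdelta w x) := by
  have hplus := hw.comp_add_left hs.le x
  have hminus := (hw.comp_add_left hs.le x).comp_neg
  refine ((Integrable.add hplus hminus).sub ((integrable_omegaS hs).const_mul (2 * w x))).congr
    (ae_of_all _ fun y => ?_)
  simp only [_root_.sdelta, Pi.add_apply, Pi.sub_apply, sub_eq_add_neg]; ring

end Weight

section Integrability

variable {n : ℕ} {s : ℝ}

lemma sdelta_zero (w : Rn n → ℝ) (x : Rn n) : sdelta w x 0 = 0 := by
  simp only [sdelta, add_zero, sub_zero]; ring

lemma sdelta_sub (u v : Rn n → ℝ) (x y : Rn n) :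
    sdelta (fun z => u z - v z) x y = sdelta u x y - sdelta v x y := by
  simp only [sdelta]; ring

lemma C11At.sub {u v : Rn n → ℝ} {x : Rn n} (hu : C11At u x) (hv : C11At v x) :
    C11At (fun z => u z - v z) x := by
  obtain ⟨Cu, hCu, ru, hru, hu⟩ := hu
  obtain ⟨Cv, hCv, rv, hrv, hv⟩ := hv
  refine ⟨Cu + Cv, by positivity, min ru rv, lt_min hru hrv, fun y hy => ?_⟩
  rw [sdelta_sub, add_mul]
  exact (abs_sub _ _).trans (add_le_add (hu y (hy.trans (min_le_left _ _)))
    (hv y (hy.trans (min_le_right _ _))))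

lemma rpow_neg_le_mul_omegaS (hs : 0 ≤ s) {r : ℝ} (hr : 0 < r) {y : Rn n} (hy : r ≤ ‖y‖) :
    ‖y‖ ^ (-((n : ℝ) + 2 * s)) ≤ (1 + r ^ (-((n : ℝ) + 2 * s))) * omegaS n s y := by
  set q : ℝ := n + 2 * s
  have hy0 : 0 < ‖y‖ := hr.trans_le hy
  have hmono : ‖y‖ ^ (-q) ≤ r ^ (-q) :=
    Real.rpow_le_rpow_of_nonpos hr hy (by simp only [q, neg_nonpos]; positivity)
  have hcancel : ‖y‖ ^ (-q) * ‖y‖ ^ q = 1 := by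
    rw [← Real.rpow_add hy0, neg_add_cancel, Real.rpow_zero]
  rw [omegaS, ← div_eq_mul_inv, le_div_iff₀ (by positivity)]
  linarith

lemma integrable_sdelta_mul_rpow (hn : 1 ≤ n) (hs0 : 0 < s) (hs1 : s < 1) {w : Rn n → ℝ}
    (hw : MemL1w n s w) {x : Rn n} (h11 : C11At w x) :
    Integrable (fun y => sdelta w x y * ‖y‖ ^ (-((n : ℝ) + 2 * s))) := by
  set q : ℝ := n + 2 * s
  obtain ⟨C₀, hC₀, r, hr, hC⟩ := h11
  have hδ := hw.sdelta hs0 x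
  have hmeas : AEStronglyMeasurable (fun y => sdelta w x y * ‖y‖ ^ (-q)) :=
    hδ.aestronglyMeasurable.mul (measurable_norm.pow_const _).aestronglyMeasurable
  have hnear : IntegrableOn (fun y => sdelta w x y * ‖y‖ ^ (-q)) (ball 0 r) := by
    refine integrableOn_ball_of_norm_le_rpow (C := C₀) (α := q - 2)
      (by rwa [finrank_euclideanSpace_fin]) (by rw [finrank_euclideanSpace_fin]; linarith)
      ((ae_restrict_iff' measurableSet_ball).2 (ae_of_all _ fun y hy => ?_)) hmeas
    rcases eq_or_ne y 0 with rfl | hy0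
    · rw [sdelta_zero, zero_mul, norm_zero]; positivity
    have hpos : 0 < ‖y‖ := norm_pos_iff.2 hy0
    calc ‖sdelta w x y * ‖y‖ ^ (-q)‖ = |sdelta w x y| * ‖y‖ ^ (-q) := by
          rw [norm_mul, Real.norm_eq_abs, Real.norm_of_nonneg (by positivity)]
      _ ≤ C₀ * ‖y‖ ^ 2 * ‖y‖ ^ (-q) := by
          gcongr; exact hC y (mem_ball_zero_iff.1 hy).le
      _ = C₀ * ‖y‖ ^ (-(q - 2)) := by
          rw [mul_assoc, ← Real.rpow_natCast, ← Real.rpow_add hpos]; congr 2; push_cast; ring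
  have hfar : IntegrableOn (fun y => sdelta w x y * ‖y‖ ^ (-q)) (ball 0 r)ᶜ := by
    refine ((Integrable.norm hδ).const_mul (1 + r ^ (-q))).integrableOn.mono' hmeas.restrict
      ((ae_restrict_iff' measurableSet_ball.compl).2 (ae_of_all _ fun y hy => ?_))
    have hry : r ≤ ‖y‖ := by simpa using hy
    rw [norm_mul, norm_mul, Real.norm_of_nonneg (Real.rpow_nonneg (norm_nonneg y) _),
      Real.norm_of_nonneg (omegaS_pos y).le, mul_left_comm]
    gcongr
    exact rpow_neg_le_mul_omegaS hs0.le hr hry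
  simpa using hnear.union hfar

end Integrability

/-- `M⁺` and `M⁻` integrate `pucciDensity Λ λ δ` and `pucciDensity λ Λ δ`
against `‖y‖^{-n-2s}`. -/
def pucciDensity (c₁ c₂ d : ℝ) : ℝ := c₁ * max d 0 - c₂ * -(min d 0)

lemma pucciDensity_mul_le {lam Lam t k : ℝ} (hk : lam * t ≤ k) (hk' : k ≤ Lam * t) (d : ℝ) :
    pucciDensity lam Lam d * t ≤ d * k := by
  rcases le_total 0 d with hd | hd
  · rw [pucciDensity, max_eq_left hd, min_eq_right hd]; nlinarith
  · rw [pucciDensity, max_eq_right hd, min_eq_left hd]; nlinarith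

lemma mul_le_pucciDensity_mul {lam Lam t k : ℝ} (hk : lam * t ≤ k) (hk' : k ≤ Lam * t)
    (d : ℝ) : d * k ≤ pucciDensity Lam lam d * t := by
  rcases le_total 0 d with hd | hd
  · rw [pucciDensity, max_eq_left hd, min_eq_right hd]; nlinarith
  · rw [pucciDensity, max_eq_right hd, min_eq_left hd]; nlinarith

lemma integrable_pucciDensity_mul {α : Type*} [MeasurableSpace α] {μ : Measure α}
    {f t : α → ℝ} (ht : ∀ a, 0 ≤ t a) (hf : Integrable (fun a => f a * t a) μ) (c₁ c₂ : ℝ) :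
    Integrable (fun a => pucciDensity c₁ c₂ (f a) * t a) μ := by
  refine ((hf.pos_part.const_mul c₁).sub (hf.neg_part.const_mul c₂)).congr
    (ae_of_all _ fun a => ?_)
  rcases le_total 0 (f a) with hf | hf
  · have hft : 0 ≤ f a * t a := mul_nonneg hf (ht a)
    simp only [pucciDensity, Pi.sub_apply, max_eq_left hf, min_eq_right hf, max_eq_left hft,
      max_eq_right (neg_nonpos.2 hft)]
    ring
  · have hft : f a * t a ≤ 0 := mul_nonpos_of_nonpos_of_nonneg hf (ht a)
    simp only [pucciDensity, Pi.sub_apply, max_eq_right hf, min_eq_left hf, max_eq_right hft,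
      max_eq_left (neg_nonneg.2 hft)]
    ring

section Kernel

variable {n : ℕ} {s lam Lam : ℝ} {K : Rn n → ℝ}

lemma InL0.abs_le (hK : InL0 n s lam Lam K) {y : Rn n} (hy : y ≠ 0) :
    |K y| ≤ max |lam| |Lam| * ‖y‖ ^ (-((n : ℝ) + 2 * s)) := by
  obtain ⟨hlow, hup⟩ := hK.2.2 y hy
  have ht : 0 ≤ ‖y‖ ^ (-((n : ℝ) + 2 * s)) := by positivity
  calc |K y| ≤ max |lam * ‖y‖ ^ (-((n : ℝ) + 2 * s))| |Lam * ‖y‖ ^ (-((n : ℝ) + 2 * s))| :=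
        abs_le_max_abs_abs hlow hup
    _ = _ := by rw [abs_mul, abs_mul, abs_of_nonneg ht, max_mul_of_nonneg _ _ ht]

variable {w : Rn n → ℝ} {x : Rn n} (hK : InL0 n s lam Lam K)
  (hδm : AEStronglyMeasurable (sdelta w x))
  (hδ : Integrable (fun y => sdelta w x y * ‖y‖ ^ (-((n : ℝ) + 2 * s))))
include hK hδm hδ

lemma integrable_sdelta_mul_kernel : Integrable (fun y => sdelta w x y * K y) := by
  refine (hδ.norm.const_mul (max |lam| |Lam|)).mono' (hδm.mul hK.1.aestronglyMeasurable)
    (ae_of_all _ fun y => ?_)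
  rcases eq_or_ne y 0 with rfl | hy
  · simp [sdelta_zero]
  rw [norm_mul, norm_mul, Real.norm_eq_abs, Real.norm_eq_abs,
    Real.norm_of_nonneg (Real.rpow_nonneg (norm_nonneg y) _), mul_left_comm]
  gcongr
  exact hK.abs_le hy

lemma Mminus_le_Lop : Mminus n s lam Lam w x ≤ Lop K w x := by
  refine integral_mono (integrable_pucciDensity_mul (fun y => by positivity) hδ lam Lam)
    (integrable_sdelta_mul_kernel hK hδm hδ) fun y => ?_
  rcases eq_or_ne y 0 with rfl | hy
  · simp [sdelta_zero]
  · exact pucciDensity_mul_le (hK.2.2 y hy).1 (hK.2.2 y hy).2 _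

lemma Lop_le_Mplus : Lop K w x ≤ Mplus n s lam Lam w x := by
  refine integral_mono (integrable_sdelta_mul_kernel hK hδm hδ)
    (integrable_pucciDensity_mul (fun y => by positivity) hδ Lam lam) fun y => ?_
  rcases eq_or_ne y 0 with rfl | hy
  · simp [sdelta_zero]
  · exact mul_le_pucciDensity_mul (hK.2.2 y hy).1 (hK.2.2 y hy).2 _

end Kernel

lemma Lop_sub {n : ℕ} {K u v : Rn n → ℝ} {x : Rn n}
    (hu : Integrable (fun y => sdelta u x y * K y)) (hv : Integrable (fun y => sdelta v x y * K y)) :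
    Lop K u x - Lop K v x = Lop K (fun z => u z - v z) x := by
  rw [Lop, Lop, Lop, ← integral_sub hu hv]
  congr 1 with y
  rw [sdelta_sub]; ring

lemma ciInf_sub_ciInf_le {ι : Type*} [Nonempty ι] {f g : ι → ℝ} {c : ℝ}
    (hf : BddBelow (range f)) (h : ∀ i, f i - g i ≤ c) : (⨅ i, f i) - (⨅ i, g i) ≤ c := by
  have : (⨅ i, f i) - c ≤ ⨅ i, g i := le_ciInf fun i => by linarith [ciInf_le hf i, h i]
  linarith

theorem inf_operator_elliptic_general
    (n : ℕ) (hn : 1 ≤ n) (s : ℝ) (hs0 : 0 < s) (hs1 : s < 1)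
    (lam Lam : ℝ)
    (A : Type) (hA : Nonempty A) (Ker : A → Rn n → ℝ)
    (hK : ∀ a, InL0 n s lam Lam (Ker a))
    (u v : Rn n → ℝ)
    (huL1 : MemL1w n s u) (hvL1 : MemL1w n s v)
    (x : Rn n) (hu11 : C11At u x) (hv11 : C11At v x) :
    (∀ a, Integrable (fun y => sdelta u x y * Ker a y)) ∧
      (∀ a, Integrable (fun y => sdelta v x y * Ker a y)) ∧
      BddBelow (Set.range fun a => Lop (Ker a) u x) ∧
      BddBelow (Set.range fun a => Lop (Ker a) v x) ∧
      Mminus n s lam Lam (fun z => u z - v z) x ≤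
        (⨅ a, Lop (Ker a) u x) - (⨅ a, Lop (Ker a) v x) ∧
      (⨅ a, Lop (Ker a) u x) - (⨅ a, Lop (Ker a) v x) ≤
        Mplus n s lam Lam (fun z => u z - v z) x := by
  have regularity : ∀ w, MemL1w n s w → C11At w x → AEStronglyMeasurable (sdelta w x) ∧
      Integrable (fun y => sdelta w x y * ‖y‖ ^ (-((n : ℝ) + 2 * s))) := fun w hw h11 =>
    ⟨(hw.sdelta hs0 x).aestronglyMeasurable, integrable_sdelta_mul_rpow hn hs0 hs1 hw h11⟩
  obtain ⟨hum, hu⟩ := regularity u huL1 hu11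
  obtain ⟨hvm, hv⟩ := regularity v hvL1 hv11
  obtain ⟨hDm, hD⟩ := regularity _ (huL1.sub hvL1) (hu11.sub hv11)
  have hIu a := integrable_sdelta_mul_kernel (hK a) hum hu
  have hIv a := integrable_sdelta_mul_kernel (hK a) hvm hv
  have hsub a := Lop_sub (hIu a) (hIv a)
  have hbu : BddBelow (range fun a => Lop (Ker a) u x) :=
    ⟨_, forall_mem_range.2 fun a => Mminus_le_Lop (hK a) hum hu⟩
  have hbv : BddBelow (range fun a => Lop (Ker a) v x) :=
    ⟨_, forall_mem_range.2 fun a => Mminus_le_Lop (hK a) hvm hv⟩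
  refine ⟨hIu, hIv, hbu, hbv, ?_,
    ciInf_sub_ciInf_le hbu fun a => (hsub a).trans_le (Lop_le_Mplus (hK a) hDm hD)⟩
  have := ciInf_sub_ciInf_le hbv fun a =>
    show Lop (Ker a) v x - Lop (Ker a) u x ≤ -Mminus n s lam Lam (fun z => u z - v z) x by
      linarith [hsub a, Mminus_le_Lop (hK a) hDm hD]
  linarith

/-- **Ellipticity of inf-type operators.** If `Iw(x) = inf_a L_a w(x)` with kernels in `L₀`,
and `u`, `v` are `C^{1,1}` at `x` and in `L¹(ω_s)`, then `Iu(x)`, `Iv(x)` are well defined and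
finite and `M⁻(u−v)(x) ≤ Iu(x) − Iv(x) ≤ M⁺(u−v)(x)`. -/
theorem inf_operator_elliptic
    (n : ℕ) (hn : 1 ≤ n) (s : ℝ) (hs0 : 0 < s) (hs1 : s < 1)
    (lam Lam : ℝ) (hlam : 0 < lam) (hlL : lam ≤ Lam)
    (A : Type) (hA : Nonempty A) (Ker : A → Rn n → ℝ)
    (hK : ∀ a, InL0 n s lam Lam (Ker a))
    (u v : Rn n → ℝ) (hum : Measurable u) (hvm : Measurable v)
    (huL1 : MemL1w n s u) (hvL1 : MemL1w n s v)
    (x : Rn n) (hu11 : C11At u x) (hv11 : C11At v x) :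
    (∀ a, Integrable (fun y => sdelta u x y * Ker a y)) ∧
      (∀ a, Integrable (fun y => sdelta v x y * Ker a y)) ∧
      BddBelow (Set.range fun a => Lop (Ker a) u x) ∧
      BddBelow (Set.range fun a => Lop (Ker a) v x) ∧
      Mminus n s lam Lam (fun z => u z - v z) x ≤
        (⨅ a, Lop (Ker a) u x) - (⨅ a, Lop (Ker a) v x) ∧
      (⨅ a, Lop (Ker a) u x) - (⨅ a, Lop (Ker a) v x) ≤
        Mplus n s lam Lam (fun z => u z - v z) x :=
  inf_operator_elliptic_general n hn s hs0 hs1 lam Lam A hA Ker hK u v huL1 hvL1 x hu11 hv11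
end
end

section
/- (Jensen inequality for concave nonlocal operators) Let {K_a}_{a∈A} ⊆ L₀ be a nonempty family of kernels with associated linear operators L_a, and set Iw(x) := inf_{a∈A} L_a w(x). Let u : ℝⁿ → ℝ be bounded and twice continuously differentiable with bounded second derivatives, and let μ ∈ L¹(ℝⁿ) satisfy μ ≥ 0 almost everywhere, μ compactly supported, and ∫_{ℝⁿ} μ(h) dh = 1. Define v(x) := ∫_{ℝⁿ} u(x+h) μ(h) dh. Then for every x ∈ ℝⁿ, Iv(x) ≥ ∫_{ℝⁿ} Iu(x+h) μ(h) dh. -/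
open MeasureTheory Metric Set Filter
open scoped ENNReal RealInnerProductSpace Topology

noncomputable section

/-!
Each `L_a` commutes with the mollification: by Fubini, `L_a v(x) = ∫ L_a u(x+h) μ(h) dh`, the
double integral converging absolutely because `|δ(u,z,y)| ≤ min(4‖u‖_∞, ‖D²u‖_∞ |y|²)` is
integrable against `|y|^{-n-2s}`. Since `μ ≥ 0` and `Iu ≤ L_a u`, integrating gives
`∫ Iu(x+h) μ(h) dh ≤ L_a v(x)` for every `a`; the left side is a genuine integral because `Iu`,
an infimum of uniformly bounded continuous functions, is bounded and upper semicontinuous.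
-/

section RadialIntegrability

variable {E : Type*} [NormedAddCommGroup E] [NormedSpace ℝ E] [FiniteDimensional ℝ E]
  [MeasurableSpace E] [BorelSpace E] {μ : Measure E} [μ.IsAddHaarMeasure]

lemma integrableOn_compl_ball_rpow_neg {q : ℝ} (hq : (Module.finrank ℝ E : ℝ) < q) :
    IntegrableOn (fun y : E => ‖y‖ ^ (-q)) (ball 0 1)ᶜ μ := by
  have hq0 : 0 < q := (Nat.cast_nonneg _).trans_lt hq
  refine (((integrable_one_add_norm hq).const_mul (2 ^ q)).integrableOn).mono'
    (by fun_prop : Measurable fun y : E => ‖y‖ ^ (-q)).aestronglyMeasurable ?_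
  filter_upwards [self_mem_ae_restrict measurableSet_ball.compl] with y hy
  have hy1 : 1 ≤ ‖y‖ := by simpa using hy
  rw [Real.norm_of_nonneg (by positivity)]
  calc ‖y‖ ^ (-q) = 2 ^ q * (2 * ‖y‖) ^ (-q) := by
        rw [Real.mul_rpow zero_le_two (norm_nonneg y), ← mul_assoc,
          ← Real.rpow_add zero_lt_two, add_neg_cancel, Real.rpow_zero, one_mul]
    _ ≤ 2 ^ q * (1 + ‖y‖) ^ (-q) := mul_le_mul_of_nonneg_left
        (Real.rpow_le_rpow_of_nonpos (by positivity) (by linarith) (by linarith)) (by positivity)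

lemma integrable_min_mul_rpow_neg (hd : 1 ≤ Module.finrank ℝ E) {c₁ c₂ q : ℝ}
    (hc₁ : 0 ≤ c₁) (hc₂ : 0 ≤ c₂) (hq : (Module.finrank ℝ E : ℝ) < q)
    (hq₂ : q < Module.finrank ℝ E + 2) :
    Integrable (fun y : E => min c₁ (c₂ * ‖y‖ ^ 2) * ‖y‖ ^ (-q)) μ := by
  have hq0 : 0 < q := (Nat.cast_nonneg _).trans_lt hq
  have hmeas : AEStronglyMeasurable (fun y : E => min c₁ (c₂ * ‖y‖ ^ 2) * ‖y‖ ^ (-q)) μ := by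
    fun_prop
  have hnorm : ∀ y : E, ‖min c₁ (c₂ * ‖y‖ ^ 2) * ‖y‖ ^ (-q)‖
      = min c₁ (c₂ * ‖y‖ ^ 2) * ‖y‖ ^ (-q) :=
    fun y => Real.norm_of_nonneg (by positivity)
  rw [← integrableOn_univ, ← union_compl_self (ball (0 : E) 1)]
  refine .union (integrableOn_ball_of_norm_le_rpow hd (C := c₂) (α := q - 2)
    (by linarith) (.of_forall fun y => ?_) hmeas) ?_
  · rw [hnorm]
    rcases eq_or_ne y 0 with rfl | hy
    · simp [Real.zero_rpow (neg_ne_zero.2 hq0.ne')]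
      positivity
    · calc min c₁ (c₂ * ‖y‖ ^ 2) * ‖y‖ ^ (-q) ≤ c₂ * ‖y‖ ^ 2 * ‖y‖ ^ (-q) := by
            gcongr; exact min_le_right _ _
        _ = c₂ * ‖y‖ ^ (-(q - 2)) := by
            rw [mul_assoc, ← Real.rpow_natCast, ← Real.rpow_add (norm_pos_iff.2 hy)]
            ring_nf
  · refine ((integrableOn_compl_ball_rpow_neg hq).const_mul c₁).mono' hmeas.restrict
      (.of_forall fun y => ?_)
    rw [hnorm]
    gcongr
    exact min_le_left _ _

end RadialIntegrability

section SecondDifference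

variable {n : ℕ} {u : Rn n → ℝ}

@[simp]
lemma sdelta_zero_right (x : Rn n) : sdelta u x 0 = 0 := by
  simp only [sdelta, add_zero, sub_zero]
  ring

lemma continuous_sdelta_uncurry (hu : Continuous u) :
    Continuous fun p : Rn n × Rn n => sdelta u p.1 p.2 := by
  unfold sdelta
  fun_prop

lemma abs_sdelta_le_of_abs_le {M : ℝ} (hu : ∀ x, |u x| ≤ M) (x y : Rn n) :
    |sdelta u x y| ≤ 4 * M := by
  have h₁ := abs_le.1 (hu (x + y))
  have h₂ := abs_le.1 (hu (x - y))
  have h₃ := abs_le.1 (hu x)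
  exact abs_le.2 ⟨by unfold sdelta; linarith, by unfold sdelta; linarith⟩

lemma abs_sdelta_le_of_norm_iteratedFDeriv_le {M : ℝ} (hu : ContDiff ℝ 2 u)
    (hD2 : ∀ x, ‖iteratedFDeriv ℝ 2 u x‖ ≤ M) (x y : Rn n) :
    |sdelta u x y| ≤ M * ‖y‖ ^ 2 := by
  have hdiff : Differentiable ℝ u := hu.differentiable two_ne_zero
  have hdiff' : Differentiable ℝ (fderiv ℝ u) :=
    (hu.fderiv_right le_rfl).differentiable one_ne_zero
  have hlip : ∀ a b, ‖fderiv ℝ u a - fderiv ℝ u b‖ ≤ M * ‖a - b‖ := fun a b =>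
    convex_univ.norm_image_sub_le_of_norm_fderiv_le (fun w _ => hdiff' w)
      (fun w _ => by
        rw [← norm_iteratedFDeriv_zero (𝕜 := ℝ), norm_iteratedFDeriv_fderiv,
          norm_iteratedFDeriv_fderiv]
        exact hD2 w)
      (mem_univ b) (mem_univ a)
  -- `δ(u,x,y) = G y - G 0`, and `‖DG‖ ≤ M ‖y‖` because `Du` is `M`-Lipschitz.
  set G : Rn n → ℝ := fun w => u (x + w) - u (x - y + w)
  have hG : ∀ w, HasFDerivAt G (fderiv ℝ u (x + w) - fderiv ℝ u (x - y + w)) w := fun w =>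
    ((hdiff _).hasFDerivAt.comp w ((hasFDerivAt_id w).const_add x)).sub
      ((hdiff _).hasFDerivAt.comp w ((hasFDerivAt_id w).const_add (x - y)))
  have hG' : ∀ w, ‖fderiv ℝ u (x + w) - fderiv ℝ u (x - y + w)‖ ≤ M * ‖y‖ := fun w => by
    simpa only [add_sub_add_right_eq_sub, sub_sub_cancel] using hlip (x + w) (x - y + w)
  have key := convex_univ.norm_image_sub_le_of_norm_hasFDerivWithin_le
    (fun w _ => (hG w).hasFDerivWithinAt) (fun w _ => hG' w) (mem_univ 0) (mem_univ y)
  have hGy : G y - G 0 = sdelta u x y := by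
    simp only [G, sdelta, add_zero, sub_add_cancel]
    ring
  rw [hGy, Real.norm_eq_abs, sub_zero] at key
  linarith

lemma InL0.abs_sdelta_mul_le {s lam Lam : ℝ} {K b : Rn n → ℝ} (hK : InL0 n s lam Lam K)
    (hlam : 0 ≤ lam) (hLam : 0 ≤ Lam) (hb : ∀ x y, |sdelta u x y| ≤ b y) (x y : Rn n) :
    |sdelta u x y * K y| ≤ Lam * (b y * ‖y‖ ^ (-((n : ℝ) + 2 * s))) := by
  rcases eq_or_ne y 0 with rfl | hy
  · have hb0 := hb x 0
    simp only [sdelta_zero_right, zero_mul, abs_zero] at hb0 ⊢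
    positivity
  obtain ⟨hlow, hup⟩ := hK.2.2 y hy
  have hK0 : 0 ≤ K y := le_trans (by positivity) hlow
  rw [abs_mul, abs_of_nonneg hK0, mul_left_comm]
  exact mul_le_mul (hb x y) hup hK0 ((abs_nonneg _).trans (hb x y))

end SecondDifference

section Dominated

variable {n : ℕ} {K u g : Rn n → ℝ}

lemma integrable_sdelta_mul (hu : Continuous u) (hK : Measurable K) (hg : Integrable g)
    (hdom : ∀ x y, |sdelta u x y * K y| ≤ g y) (x : Rn n) :
    Integrable fun y => sdelta u x y * K y :=
  hg.mono' (((continuous_sdelta_uncurry hu).comp (Continuous.prodMk_right x)).measurable.mul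
    hK).aestronglyMeasurable (.of_forall (hdom x))

lemma abs_Lop_le (hg : Integrable g) (hdom : ∀ x y, |sdelta u x y * K y| ≤ g y) (x : Rn n) :
    |Lop K u x| ≤ ∫ y, g y :=
  (Real.norm_eq_abs _).symm.trans_le <| norm_integral_le_of_norm_le hg (.of_forall (hdom x))

lemma continuous_Lop (hu : Continuous u) (hK : Measurable K) (hg : Integrable g)
    (hdom : ∀ x y, |sdelta u x y * K y| ≤ g y) : Continuous (Lop K u) :=
  continuous_of_dominated (fun x => (integrable_sdelta_mul hu hK hg hdom x).aestronglyMeasurable)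
    (fun x => .of_forall (hdom x)) hg (.of_forall fun y =>
      ((continuous_sdelta_uncurry hu).comp (Continuous.prodMk_left y)).mul continuous_const)

end Dominated

section Mollification

variable {n : ℕ} {u μ : Rn n → ℝ} {M : ℝ}

lemma integrable_comp_const_add_mul (hu : Continuous u) (hM : ∀ x, |u x| ≤ M)
    (hμ : Integrable μ) (z : Rn n) : Integrable fun h => u (z + h) * μ h :=
  hμ.bdd_mul (hu.comp (continuous_const_add z)).aestronglyMeasurable
    (.of_forall fun _ => (Real.norm_eq_abs _).trans_le (hM _))

lemma sdelta_mollify (hu : Continuous u) (hM : ∀ x, |u x| ≤ M) (hμ : Integrable μ)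
    (x y : Rn n) :
    sdelta (fun z => ∫ h, u (z + h) * μ h) x y = ∫ h, sdelta u (x + h) y * μ h := by
  have hI := integrable_comp_const_add_mul hu hM hμ
  simp only [sdelta]
  rw [← integral_add (hI _) (hI _), ← integral_const_mul,
    ← integral_sub ?_ ((hI _).const_mul 2)]
  · congr 1 with h
    rw [show x + h + y = x + y + h by abel, show x + h - y = x - y + h by abel]
    ring
  exact (hI _).add (hI _)

lemma Lop_mollify {K g : Rn n → ℝ} (hu : Continuous u) (hM : ∀ x, |u x| ≤ M)
    (hK : Measurable K) (hg : Integrable g) (hdom : ∀ x y, |sdelta u x y * K y| ≤ g y)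
    (hμ : Integrable μ) (x : Rn n) :
    Lop K (fun z => ∫ h, u (z + h) * μ h) x = ∫ h, Lop K u (x + h) * μ h := by
  have hprod : Integrable (Function.uncurry fun h y => sdelta u (x + h) y * K y * μ h)
      (volume.prod volume) := by
    refine (hμ.norm.mul_prod hg).mono' ?_ (.of_forall fun p => ?_)
    · exact ((((continuous_sdelta_uncurry hu).comp (by fun_prop :
        Continuous fun p : Rn n × Rn n => (x + p.1, p.2))).measurable.mul
        (hK.comp measurable_snd)).aestronglyMeasurable).mul hμ.aestronglyMeasurable.comp_fst
    · rw [Function.uncurry_apply_pair, Real.norm_eq_abs, abs_mul, mul_comm, Real.norm_eq_abs]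
      exact mul_le_mul_of_nonneg_left (hdom _ _) (abs_nonneg _)
  calc Lop K (fun z => ∫ h, u (z + h) * μ h) x = ∫ y, ∫ h, sdelta u (x + h) y * K y * μ h := by
        unfold Lop
        congr 1 with y
        rw [sdelta_mollify hu hM hμ, ← integral_mul_const]
        congr 1 with h
        ring
    _ = ∫ h, ∫ y, sdelta u (x + h) y * K y * μ h := (integral_integral_swap hprod).symm
    _ = ∫ h, Lop K u (x + h) * μ h := by
        congr 1 with h
        exact integral_mul_const _ _

end Mollification

lemma integral_iInf_mul_le_iInf_integral_mul {X ι : Type*} [TopologicalSpace X]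
    [MeasurableSpace X] [OpensMeasurableSpace X] {ν : Measure X} [Nonempty ι]
    {f : ι → X → ℝ} {C : ℝ} (hf : ∀ i, UpperSemicontinuous (f i)) (hC : ∀ i x, |f i x| ≤ C)
    {w : X → ℝ} (hw : Integrable w ν) (hw0 : 0 ≤ᵐ[ν] w) :
    ∫ x, (⨅ i, f i x) * w x ∂ν ≤ ⨅ i, ∫ x, f i x * w x ∂ν := by
  have hbdd : ∀ x, BddBelow (range fun i => f i x) := fun x =>
    ⟨-C, by rintro _ ⟨i, rfl⟩; exact neg_le_of_abs_le (hC i x)⟩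
  have hinf : ∀ x, |⨅ i, f i x| ≤ C := fun x =>
    abs_le.2 ⟨le_ciInf fun i => neg_le_of_abs_le (hC i x),
      (ciInf_le (hbdd x) (Classical.arbitrary ι)).trans (le_of_abs_le (hC _ x))⟩
  have hint : Integrable (fun x => (⨅ i, f i x) * w x) ν :=
    hw.bdd_mul (upperSemicontinuous_ciInf hbdd hf).measurable.aestronglyMeasurable
      (.of_forall fun x => (Real.norm_eq_abs _).trans_le (hinf x))
  refine le_ciInf fun i => integral_mono_ae hint
    (hw.bdd_mul (hf i).measurable.aestronglyMeasurable
      (.of_forall fun x => (Real.norm_eq_abs _).trans_le (hC i x))) ?_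
  filter_upwards [hw0] with x hx
  exact mul_le_mul_of_nonneg_right (ciInf_le (hbdd x) i) hx

theorem jensen_concave_nonlocal_general
    (n : ℕ) (hn : 1 ≤ n) (s : ℝ) (hs0 : 0 < s) (hs1 : s < 1)
    (lam Lam : ℝ) (hlam : 0 < lam) (hlL : lam ≤ Lam)
    (A : Type) (hA : Nonempty A) (Ker : A → Rn n → ℝ)
    (hK : ∀ a, InL0 n s lam Lam (Ker a))
    (u : Rn n → ℝ) (hu2 : ContDiff ℝ 2 u)
    (hub : ∃ M, ∀ x, |u x| ≤ M)
    (hD2b : ∃ M, ∀ x, ‖iteratedFDeriv ℝ 2 u x‖ ≤ M)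
    (μ : Rn n → ℝ) (hμint : Integrable μ) (hμpos : ∀ᵐ h, 0 ≤ μ h) :
    ∀ x : Rn n,
      (∫ h, (⨅ a, Lop (Ker a) u (x + h)) * μ h) ≤
        ⨅ a, Lop (Ker a) (fun z => ∫ h, u (z + h) * μ h) x := by
  intro x
  obtain ⟨M, hM⟩ := hub
  obtain ⟨M₂, hM₂⟩ := hD2b
  have hu : Continuous u := hu2.continuous
  set g : Rn n → ℝ := fun y => Lam * (min (4 * M) (M₂ * ‖y‖ ^ 2) * ‖y‖ ^ (-((n : ℝ) + 2 * s)))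
  have hg : Integrable g := by
    refine (integrable_min_mul_rpow_neg (by simpa) ?_ ?_ ?_ ?_).const_mul Lam
    · linarith [(abs_nonneg _).trans (hM 0)]
    · exact (norm_nonneg _).trans (hM₂ 0)
    all_goals simp only [finrank_euclideanSpace_fin]; linarith
  have hdom : ∀ a z y, |sdelta u z y * Ker a y| ≤ g y := fun a =>
    (hK a).abs_sdelta_mul_le hlam.le (hlam.le.trans hlL) fun z y =>
      le_min (abs_sdelta_le_of_abs_le hM z y) (abs_sdelta_le_of_norm_iteratedFDeriv_le hu2 hM₂ z y)
  simp_rw [Lop_mollify hu hM (hK _).1 hg (hdom _) hμint]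
  have hcont : ∀ a, Continuous fun h => Lop (Ker a) u (x + h) := fun a =>
    (continuous_Lop hu (hK a).1 hg (hdom a)).comp (continuous_const_add x)
  exact integral_iInf_mul_le_iInf_integral_mul (fun a => (hcont a).upperSemicontinuous)
    (fun a h => abs_Lop_le hg (hdom a) (x + h)) hμint hμpos

/-- **Jensen inequality for concave nonlocal operators.** If `I = inf_a L_a` and
`v = ∫ u(·+h)μ(h)dh` is a mollification of `u` by a compactly supported probability density
`μ`, then `Iv(x) ≥ ∫ Iu(x+h)μ(h)dh`. -/
theorem jensen_concave_nonlocal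
    (n : ℕ) (hn : 1 ≤ n) (s : ℝ) (hs0 : 0 < s) (hs1 : s < 1)
    (lam Lam : ℝ) (hlam : 0 < lam) (hlL : lam ≤ Lam)
    (A : Type) (hA : Nonempty A) (Ker : A → Rn n → ℝ)
    (hK : ∀ a, InL0 n s lam Lam (Ker a))
    (u : Rn n → ℝ) (hu2 : ContDiff ℝ 2 u)
    (hub : ∃ M, ∀ x, |u x| ≤ M)
    (hD2b : ∃ M, ∀ x, ‖iteratedFDeriv ℝ 2 u x‖ ≤ M)
    (μ : Rn n → ℝ) (hμint : Integrable μ) (hμpos : ∀ᵐ h, 0 ≤ μ h)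
    (hμsupp : HasCompactSupport μ) (hμ1 : (∫ h, μ h) = 1) :
    ∀ x : Rn n,
      (∫ h, (⨅ a, Lop (Ker a) u (x + h)) * μ h) ≤
        ⨅ a, Lop (Ker a) (fun z => ∫ h, u (z + h) * μ h) x :=
  jensen_concave_nonlocal_general n hn s hs0 hs1 lam Lam hlam hlL A hA Ker hK u hu2 hub hD2b μ hμint
    hμpos
end
end
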